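/- Exchanging subtrees reduces energy: let a tree T have subtrees at root-child positions i < j with N_i < N_j leaves respectively. The tree T' obtained by swapping these two subtrees has the same number of leaves and the same sum depth as T, but strictly smaller sum energy. -/
import Mathlib


/-- Ordered rooted trees: a node with a (possibly empty) ordered list of children. -/
inductive RTree where
  | node : List RTree → RTree

mutual
  /-- The list of depths of all leaves of the tree (in left-to-right order). -/
  def RTree.leafDepths : RTree → List ℕ
    | .node [] => [0]
    | .node (c :: cs) => RTree.leafDepthsAux (c :: cs)
  /-- Leaf depths of a forest, viewed as the children of a common root. -/
  def RTree.leafDepthsAux : List RTree → List ℕ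
    | [] => []
    | t :: ts => (RTree.leafDepths t).map (· + 1) ++ RTree.leafDepthsAux ts
end

/-- Number of leaves. -/
def RTree.numLeaves (t : RTree) : ℕ := t.leafDepths.length

/-- Height: the maximum leaf depth. -/
def RTree.height (t : RTree) : ℕ := t.leafDepths.foldr max 0

/-- Sum depth: total of all leaf depths. -/
def RTree.sumDepth (t : RTree) : ℕ := t.leafDepths.sum

mutual
  /-- Energies of all leaves over the M-ASK alphabet: the `j`-th edge (0-based)
  from any node carries symbol `2j+1` of energy `(2j+1)²`, and a leaf's energy is
  the sum of squared symbols along its root-to-leaf path. -/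
  def RTree.leafEnergies : RTree → List ℕ
    | .node [] => [0]
    | .node (c :: cs) => RTree.leafEnergiesAux 0 (c :: cs)
  def RTree.leafEnergiesAux : ℕ → List RTree → List ℕ
    | _, [] => []
    | j, t :: ts => (RTree.leafEnergies t).map (· + (2 * j + 1) ^ 2)
        ++ RTree.leafEnergiesAux (j + 1) ts
end

/-- Sum energy: total of all leaf energies. -/
def RTree.sumEnergy (t : RTree) : ℕ := t.leafEnergies.sum

/-- Every node has at most `M` children. -/
inductive RTree.MaxDeg (M : ℕ) : RTree → Prop
  | node (cs : List RTree) (hlen : cs.length ≤ M)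
      (hc : ∀ t ∈ cs, RTree.MaxDeg M t) : RTree.MaxDeg M (.node cs)

/-- A `2⁺`-tree: every internal (non-leaf) node has at least two children. -/
inductive RTree.MinDeg2 : RTree → Prop
  | node (cs : List RTree) (hlen : cs.length ≠ 1)
      (hc : ∀ t ∈ cs, RTree.MinDeg2 t) : RTree.MinDeg2 (.node cs)

/-- Full binary trees: every internal node has exactly two ordered children. -/
inductive RTree.FullBin : RTree → Prop
  | leaf : RTree.FullBin (.node [])
  | node (a b : RTree) : RTree.FullBin a → RTree.FullBin b →
      RTree.FullBin (.node [a, b])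

-- helpers
lemma sum_map_add (l : List ℕ) (c : ℕ) : (l.map (· + c)).sum = l.sum + c * l.length := by
  induction l with
  | nil => simp
  | cons a l ih => simp [ih]; ring

mutual
  theorem RTree.energies_len : (t : RTree) → t.leafEnergies.length = t.leafDepths.length
    | .node [] => rfl
    | .node (c :: cs) => by
        simp [RTree.leafEnergies, RTree.leafDepths, RTree.energiesAux_len 0 (c :: cs)]
  theorem RTree.energiesAux_len : (j : ℕ) → (ts : List RTree) →
      (RTree.leafEnergiesAux j ts).length = (RTree.leafDepthsAux ts).length
    | _, [] => rfl
    | j, t :: ts => by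
        simp [RTree.leafEnergiesAux, RTree.leafDepthsAux, RTree.energies_len t,
          RTree.energiesAux_len (j+1) ts]
end

def RTree.Lsum : List RTree → ℕ
  | [] => 0
  | t :: ts => t.numLeaves + RTree.Lsum ts

def RTree.Dsum : List RTree → ℕ
  | [] => 0
  | t :: ts => (t.sumDepth + t.numLeaves) + RTree.Dsum ts

def RTree.F : ℕ → List RTree → ℕ
  | _, [] => 0
  | j, t :: ts => (t.sumEnergy + (2 * j + 1) ^ 2 * t.numLeaves) + RTree.F (j + 1) ts

lemma depthsAux_length (ts : List RTree) :
    (RTree.leafDepthsAux ts).length = RTree.Lsum ts := by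
  induction ts with
  | nil => rfl
  | cons t ts ih => simp [RTree.leafDepthsAux, RTree.Lsum, ih, RTree.numLeaves]

lemma depthsAux_sum (ts : List RTree) :
    (RTree.leafDepthsAux ts).sum = RTree.Dsum ts := by
  induction ts with
  | nil => rfl
  | cons t ts ih =>
      simp [RTree.leafDepthsAux, RTree.Dsum, ih, RTree.numLeaves, RTree.sumDepth, sum_map_add]

lemma energiesAux_sum (ts : List RTree) : ∀ j, (RTree.leafEnergiesAux j ts).sum = RTree.F j ts := by
  induction ts with
  | nil => intro j; rfl
  | cons t ts ih =>
      intro j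
      simp [RTree.leafEnergiesAux, RTree.F, ih, sum_map_add, RTree.sumEnergy, RTree.numLeaves,
        RTree.energies_len, Nat.mul_comm]

lemma Lsum_append (l1 l2 : List RTree) : RTree.Lsum (l1 ++ l2) = RTree.Lsum l1 + RTree.Lsum l2 := by
  induction l1 with
  | nil => simp [RTree.Lsum]
  | cons t l ih => simp [RTree.Lsum, ih]; ring

lemma Dsum_append (l1 l2 : List RTree) : RTree.Dsum (l1 ++ l2) = RTree.Dsum l1 + RTree.Dsum l2 := by
  induction l1 with
  | nil => simp [RTree.Dsum]
  | cons t l ih => simp [RTree.Dsum, ih]; ring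

lemma F_append (l1 : List RTree) : ∀ j (l2 : List RTree),
    RTree.F j (l1 ++ l2) = RTree.F j l1 + RTree.F (j + l1.length) l2 := by
  induction l1 with
  | nil => intro j l2; simp [RTree.F]
  | cons t l ih =>
      intro j l2
      simp [RTree.F, ih (j+1) l2]
      ring_nf

lemma node_numLeaves (ts : List RTree) (h : ts ≠ []) :
    (RTree.node ts).numLeaves = RTree.Lsum ts := by
  match ts with
  | t :: ts' => simp [RTree.numLeaves, RTree.leafDepths, depthsAux_length]

lemma node_sumDepth (ts : List RTree) (h : ts ≠ []) :
    (RTree.node ts).sumDepth = RTree.Dsum ts := by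
  match ts with
  | t :: ts' => simp [RTree.sumDepth, RTree.leafDepths, depthsAux_sum]

lemma node_sumEnergy (ts : List RTree) (h : ts ≠ []) :
    (RTree.node ts).sumEnergy = RTree.F 0 ts := by
  match ts with
  | t :: ts' => simp [RTree.sumEnergy, RTree.leafEnergies, energiesAux_sum]

lemma set_append_cons {α : Type*} (l1 : List α) (a b : α) (l2 : List α) :
    (l1 ++ a :: l2).set l1.length b = l1 ++ b :: l2 := by
  induction l1 with
  | nil => rfl
  | cons x l ih => simp [List.set, ih]

/-- Exchanging subtrees reduces energy. If a tree `node cs` has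
subtrees at root-child positions `i < j` with `N_i < N_j` leaves, then swapping
these two subtrees preserves the number of leaves and the sum depth but strictly
decreases the sum energy. -/
theorem swap_subtrees_reduces_energy (cs : List RTree)
    (i j : ℕ) (hij : i < j) (hj : j < cs.length)
    (hlt : (cs.get ⟨i, hij.trans hj⟩).numLeaves < (cs.get ⟨j, hj⟩).numLeaves) :
    (RTree.node ((cs.set i (cs.get ⟨j, hj⟩)).set j
        (cs.get ⟨i, hij.trans hj⟩))).numLeaves = (RTree.node cs).numLeaves
    ∧ (RTree.node ((cs.set i (cs.get ⟨j, hj⟩)).set j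
        (cs.get ⟨i, hij.trans hj⟩))).sumDepth = (RTree.node cs).sumDepth
    ∧ (RTree.node ((cs.set i (cs.get ⟨j, hj⟩)).set j
        (cs.get ⟨i, hij.trans hj⟩))).sumEnergy < (RTree.node cs).sumEnergy := by
  have hi : i < cs.length := hij.trans hj
  simp only [List.get_eq_getElem] at hlt ⊢
  set x := cs[i] with hx
  set y := cs[j] with hy
  set A := cs.take i with hA
  set B := (cs.drop (i+1)).take (j - (i+1)) with hB
  set C := cs.drop (j+1) with hC
  have hAlen : A.length = i := by simp [hA]; omega
  have hBlen : B.length = j - (i+1) := by simp [hB]; omega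
  have hdropi1 : cs.drop (i+1) = B ++ (y :: C) := by
    rw [hB, hC, hy]
    conv_lhs => rw [← List.take_append_drop (j - (i+1)) (cs.drop (i+1))]
    rw [List.drop_drop]
    have h : (i + 1) + (j - (i+1)) = j := by omega
    rw [h, List.drop_eq_getElem_cons hj]
  have hcs : cs = (A ++ x :: B) ++ y :: C := by
    conv_lhs => rw [← List.take_append_drop i cs, List.drop_eq_getElem_cons hi, hdropi1]
    simp [hA, hx]
  have hset1 : cs.set i y = (A ++ y :: B) ++ y :: C := by
    rw [List.set_eq_take_cons_drop y hi, hdropi1, ← hA]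
    simp
  have hABlen : (A ++ y :: B).length = j := by simp [hAlen]; omega
  have hset2 : (cs.set i y).set j x = (A ++ y :: B) ++ x :: C := by
    rw [hset1, ← hABlen, set_append_cons]
  rw [hset2]
  have hne1 : (A ++ y :: B) ++ x :: C ≠ [] := by simp
  have hne2 : (A ++ x :: B) ++ y :: C ≠ [] := by simp
  refine ⟨?_, ?_, ?_⟩
  · rw [node_numLeaves _ hne1]
    conv_rhs => rw [hcs]
    rw [node_numLeaves _ hne2]
    simp [Lsum_append, RTree.Lsum]
    ring
  · rw [node_sumDepth _ hne1]
    conv_rhs => rw [hcs]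
    rw [node_sumDepth _ hne2]
    simp [Dsum_append, RTree.Dsum]
    ring
  · rw [node_sumEnergy _ hne1]
    conv_rhs => rw [hcs]
    rw [node_sumEnergy _ hne2]
    have hAB2len : (A ++ x :: B).length = j := by simp [hAlen]; omega
    rw [F_append (A ++ y :: B) 0 (x :: C), F_append (A ++ x :: B) 0 (y :: C),
      F_append A 0 (y :: B), F_append A 0 (x :: B), hABlen, hAB2len, hAlen]
    simp only [RTree.F]
    have hw : (2 * i + 1) ^ 2 < (2 * j + 1) ^ 2 := by nlinarith
    nlinarith [hw, hlt]
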